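/- Let n ≥ 1 be a natural number and let u : [0,∞) → ℝ be twice differentiable with u(r) > 0 for all r ≥ 0, strictly decreasing, satisfying u''(r) + ((n-1)/r) u'(r) + f(u(r)) = 0 for all r > 0, with u'(0) = 0, and such that P(r) = r^n (u'(r)² + 2F(u(r))) + (n-2) r^{n-1} u(r) u'(r) tends to 0 as r → ∞. Assume B > 0 satisfies Σ(v) < 0 for all v ∈ (0,B), Σ(v) > 0 for all v ∈ (B, u(0)], and B < u(0). Then P(r) > 0 for all r > 0. -/

import Mathlib

/-- The double power nonlinearity `f(u) = -ω u + u^p - u^q`. -/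
noncomputable def f (ω p q u : ℝ) : ℝ := -ω * u + u ^ p - u ^ q

/-- The primitive `F(u) = -(ω/2)u² + u^{p+1}/(p+1) - u^{q+1}/(q+1)`. -/
noncomputable def F (ω p q u : ℝ) : ℝ :=
  -(ω / 2) * u ^ 2 + u ^ (p + 1) / (p + 1) - u ^ (q + 1) / (q + 1)

/-- The Pohozaev polynomial `Σ(u) = 2nF(u) - (n-2)u f(u)`. -/
noncomputable def Sig (n : ℕ) (ω p q u : ℝ) : ℝ :=
  2 * n * F ω p q u - ((n : ℝ) - 2) * u * f ω p q u

/-- The Pohozaev function `P(r) = rⁿ(u'(r)² + 2F(u(r))) + (n-2)r^{n-1}u(r)u'(r)`. -/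
noncomputable def P (n : ℕ) (ω p q : ℝ) (u u' : ℝ → ℝ) (r : ℝ) : ℝ :=
  r ^ (n : ℝ) * ((u' r) ^ 2 + 2 * F ω p q (u r)) +
    ((n : ℝ) - 2) * r ^ ((n : ℝ) - 1) * u r * u' r

/-!
Along a radial solution the Pohozaev function has derivative `P'(r) = r^{n-1} Σ(u(r))`.
Since `u` decreases from `u(0) > B`, `P` increases from `P(0) = 0` as long as `u > B`; once
`u` has crossed the level `B` it stays below it, so `P` decreases, and it decreases to the
limit `0`. In both regimes `P` stays positive.
-/

open Set Filter Topology

lemma pos_of_hasDerivAt_pos {g g' : ℝ → ℝ} {r : ℝ} (hr : 0 < r) (hg : ContinuousOn g (Icc 0 r))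
    (hg0 : g 0 = 0) (hderiv : ∀ x ∈ Ioo 0 r, HasDerivAt g (g' x) x)
    (hpos : ∀ x ∈ Ioo 0 r, 0 < g' x) : 0 < g r := by
  have hmono : StrictMonoOn g (Icc 0 r) :=
    strictMonoOn_of_hasDerivWithinAt_pos (convex_Icc 0 r) hg
      (fun x hx => (hderiv x (by rwa [interior_Icc] at hx)).hasDerivWithinAt)
      (fun x hx => hpos x (by rwa [interior_Icc] at hx))
  simpa [hg0] using hmono (left_mem_Icc.2 hr.le) (right_mem_Icc.2 hr.le) hr

lemma pos_of_hasDerivAt_neg_of_tendsto {g g' : ℝ → ℝ} {r : ℝ} (hg : ContinuousOn g (Ici r))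
    (hderiv : ∀ x ∈ Ioi r, HasDerivAt g (g' x) x) (hneg : ∀ x ∈ Ioi r, g' x < 0)
    (hlim : Tendsto g atTop (𝓝 0)) : 0 < g r := by
  have hanti : StrictAntiOn g (Ici r) :=
    strictAntiOn_of_hasDerivWithinAt_neg (convex_Ici r) hg
      (fun x hx => (hderiv x (by rwa [interior_Ici] at hx)).hasDerivWithinAt)
      (fun x hx => hneg x (by rwa [interior_Ici] at hx))
  have hlt : g (r + 1) < g r := hanti self_mem_Ici (by simp) (by linarith)
  have hnonneg : 0 ≤ g (r + 1) :=
    le_of_tendsto hlim (eventually_ge_atTop (r + 1) |>.mono fun s hs =>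
      hanti.antitoneOn (by simp) (mem_Ici.2 (by linarith)) hs)
  linarith

lemma forall_lt_or_exists_pos_eq {u : ℝ → ℝ} {B : ℝ} (hu : ContinuousOn u (Ici 0))
    (hB : B < u 0) : (∀ x, 0 ≤ x → B < u x) ∨ ∃ R, 0 < R ∧ u R = B := by
  by_contra! h
  obtain ⟨⟨s, hs, hus⟩, hnoR⟩ := h
  obtain ⟨R, hR, huR⟩ := intermediate_value_Icc' hs (hu.mono Icc_subset_Ici_self) ⟨hus, hB.le⟩
  rcases hR.1.eq_or_lt with h0 | hpos
  · rw [← h0] at huR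
    exact hB.ne' huR
  · exact hnoR R hpos huR

lemma continuousOn_F (ω p q : ℝ) : ContinuousOn (F ω p q) (Ioi 0) := by
  have hrpow (s : ℝ) : ContinuousOn (fun x : ℝ => x ^ s) (Ioi 0) :=
    continuousOn_id.rpow_const fun x hx => Or.inl (ne_of_gt hx)
  exact ((continuousOn_const.mul (continuousOn_pow 2)).add ((hrpow _).div_const _)).sub
    ((hrpow _).div_const _)

lemma hasDerivAt_F {ω p q v : ℝ} (hp : p ≠ -1) (hq : q ≠ -1) (hv : 0 < v) :
    HasDerivAt (F ω p q) (f ω p q v) v := by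
  have hp1 : p + 1 ≠ 0 := fun h => hp (by linarith)
  have hq1 : q + 1 ≠ 0 := fun h => hq (by linarith)
  refine HasDerivAt.congr_deriv (f := F ω p q)
    ((((hasDerivAt_pow 2 v).const_mul (-(ω / 2))).add
      ((Real.hasDerivAt_rpow_const (p := p + 1) (Or.inl hv.ne')).div_const (p + 1))).sub
    ((Real.hasDerivAt_rpow_const (p := q + 1) (Or.inl hv.ne')).div_const (q + 1))) ?_
  simp only [f, add_sub_cancel_right]
  field_simp
  ring

lemma hasDerivAt_P {n : ℕ} {ω p q r : ℝ} {u u' u'' : ℝ → ℝ} (hp : p ≠ -1) (hq : q ≠ -1)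
    (hr : 0 < r) (hu : HasDerivAt u (u' r) r) (hu' : HasDerivAt u' (u'' r) r) (hupos : 0 < u r)
    (hode : u'' r + ((n : ℝ) - 1) / r * u' r + f ω p q (u r) = 0) :
    HasDerivAt (P n ω p q u u') (r ^ ((n : ℝ) - 1) * Sig n ω p q (u r)) r := by
  have hpow (s : ℝ) : HasDerivAt (fun x : ℝ => x ^ s) (s * r ^ (s - 1)) r :=
    Real.hasDerivAt_rpow_const (Or.inl hr.ne')
  have hFu := (hasDerivAt_F (ω := ω) hp hq hupos).comp r hu
  refine HasDerivAt.congr_deriv (f := P n ω p q u u')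
    (((hpow _).mul ((hu'.pow 2).add (hFu.const_mul 2))).add
      ((((hpow _).const_mul ((n : ℝ) - 2)).mul hu).mul hu')) ?_
  have hu'' : u'' r = -(((n : ℝ) - 1) / r * u' r) - f ω p q (u r) := by linarith
  have hrn : r ^ (n : ℝ) = r ^ ((n : ℝ) - 1) * r := by
    rw [← Real.rpow_add_one hr.ne', sub_add_cancel]
  have hrn2 : r ^ ((n : ℝ) - 1 - 1) = r ^ ((n : ℝ) - 1) / r := by
    rw [Real.rpow_sub_one hr.ne']
  simp only [Pi.add_apply, Pi.mul_apply, Pi.pow_apply, Function.comp_apply]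
  rw [hu'', hrn, hrn2, Sig]
  field_simp
  ring

lemma continuousOn_P {n : ℕ} {ω p q : ℝ} {u u' : ℝ → ℝ} (hn : 1 ≤ n)
    (hu : ContinuousOn u (Ici 0)) (hu' : ContinuousOn u' (Ici 0))
    (hupos : ∀ r, 0 ≤ r → 0 < u r) : ContinuousOn (P n ω p q u u') (Ici 0) := by
  have hn1 : (0 : ℝ) ≤ (n : ℝ) - 1 := by
    have : (1 : ℝ) ≤ n := by exact_mod_cast hn
    linarith
  have hFu : ContinuousOn (fun r => F ω p q (u r)) (Ici 0) :=
    (continuousOn_F ω p q).comp hu fun r hr => hupos r hr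
  have hrpow {s : ℝ} (hs : 0 ≤ s) : ContinuousOn (fun x : ℝ => x ^ s) (Ici 0) :=
    continuousOn_id.rpow_const fun _ _ => Or.inr hs
  exact ((hrpow n.cast_nonneg).mul ((hu'.pow 2).add (continuousOn_const.mul hFu))).add
    (((continuousOn_const.mul (hrpow hn1)).mul hu).mul hu')

lemma P_zero {n : ℕ} {ω p q : ℝ} {u u' : ℝ → ℝ} (hn : n ≠ 0) (hu'0 : u' 0 = 0) :
    P n ω p q u u' 0 = 0 := by
  simp [P, hu'0, Real.zero_rpow (Nat.cast_ne_zero.mpr hn)]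

theorem P_pos_general (p q ω : ℝ) (hp : 1 < p) (hpq : p < q) (n : ℕ) (hn : 1 ≤ n) (u u' u'' : ℝ → ℝ)
    (hu : ∀ r, 0 ≤ r → HasDerivAt u (u' r) r)
    (hu' : ∀ r, 0 ≤ r → HasDerivAt u' (u'' r) r)
    (hupos : ∀ r, 0 ≤ r → 0 < u r)
    (hdec : StrictAntiOn u (Set.Ici (0 : ℝ)))
    (hode : ∀ r, 0 < r → u'' r + ((n : ℝ) - 1) / r * u' r + f ω p q (u r) = 0)
    (hu'0 : u' 0 = 0)
    (hPlim : Filter.Tendsto (P n ω p q u u') Filter.atTop (nhds 0))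
    (B : ℝ)
    (hSigNeg : ∀ v, 0 < v → v < B → Sig n ω p q v < 0)
    (hSigPos : ∀ v, B < v → v ≤ u 0 → 0 < Sig n ω p q v)
    (hBu : B < u 0) :
    ∀ r, 0 < r → 0 < P n ω p q u u' r := by
  intro r hr
  have hucont : ContinuousOn u (Ici 0) := fun x hx => (hu x hx).continuousAt.continuousWithinAt
  have hPcont : ContinuousOn (P n ω p q u u') (Ici 0) :=
    continuousOn_P hn hucont (fun x hx => (hu' x hx).continuousAt.continuousWithinAt) hupos
  have hP' : ∀ x, 0 < x → HasDerivAt (P n ω p q u u') (x ^ ((n : ℝ) - 1) * Sig n ω p q (u x)) x :=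
    fun x hx => hasDerivAt_P (by linarith) (by linarith) hx (hu x hx.le) (hu' x hx.le)
      (hupos x hx.le) (hode x hx)
  have hincr : ∀ t, 0 < t → (∀ x ∈ Ioo 0 t, B < u x) → 0 < P n ω p q u u' t :=
    fun t ht hBt => pos_of_hasDerivAt_pos ht (hPcont.mono Icc_subset_Ici_self)
      (P_zero (by omega) hu'0) (fun x hx => hP' x hx.1) fun x hx =>
        mul_pos (Real.rpow_pos_of_pos hx.1 _) (hSigPos _ (hBt x hx)
          (hdec.antitoneOn self_mem_Ici (mem_Ici.2 hx.1.le) hx.1.le))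
  rcases forall_lt_or_exists_pos_eq hucont hBu with hall | ⟨R, hR, huR⟩
  · exact hincr r hr fun x hx => hall x hx.1.le
  rcases le_or_gt r R with hrR | hRr
  · exact hincr r hr fun x hx =>
      huR ▸ hdec (mem_Ici.2 hx.1.le) (mem_Ici.2 hR.le) (hx.2.trans_le hrR)
  · refine pos_of_hasDerivAt_neg_of_tendsto (hPcont.mono (Ici_subset_Ici.2 hr.le))
      (fun x hx => hP' x (hr.trans hx)) (fun x hx => ?_) hPlim
    have hx0 : 0 < x := hr.trans hx
    exact mul_neg_of_pos_of_neg (Real.rpow_pos_of_pos hx0 _) (hSigNeg _ (hupos x hx0.le)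
      (huR ▸ hdec (mem_Ici.2 hR.le) (mem_Ici.2 hx0.le) (hRr.trans hx)))

/-- Corollary: under the hypotheses of Theorem 2, if moreover `Σ > 0` on `(B, u(0)]`
and `B < u(0)`, then `P(r) > 0` for all `r > 0`. -/
theorem P_pos (p q ω : ℝ) (hp : 1 < p) (hpq : p < q) (hω : 0 < ω)
    (n : ℕ) (hn : 1 ≤ n) (u u' u'' : ℝ → ℝ)
    (hu : ∀ r, 0 ≤ r → HasDerivAt u (u' r) r)
    (hu' : ∀ r, 0 ≤ r → HasDerivAt u' (u'' r) r)
    (hupos : ∀ r, 0 ≤ r → 0 < u r)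
    (hdec : StrictAntiOn u (Set.Ici (0 : ℝ)))
    (hode : ∀ r, 0 < r → u'' r + ((n : ℝ) - 1) / r * u' r + f ω p q (u r) = 0)
    (hu'0 : u' 0 = 0)
    (hPlim : Filter.Tendsto (P n ω p q u u') Filter.atTop (nhds 0))
    (B : ℝ) (hB : 0 < B)
    (hSigNeg : ∀ v, 0 < v → v < B → Sig n ω p q v < 0)
    (hSigPos : ∀ v, B < v → v ≤ u 0 → 0 < Sig n ω p q v)
    (hBu : B < u 0) :
    ∀ r, 0 < r → 0 < P n ω p q u u' r :=
  P_pos_general p q ω hp hpq n hn u u' u'' hu hu' hupos hdec hode hu'0 hPlim B hSigNeg hSigPos hBu
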